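/- Let S be a 2×2 unitary matrix with det S = 1, entries s_{ij}, and write r = s₂₁/s₁₁ (assuming s₁₁ ≠ 0). Let ρ₋ = [[D₋, P₋],[P₋*, -D₋]] with D₋ real, D₋² + |P₋|² = 1, and set ρ₊ = S⁻¹ ρ₋ S = [[D₊, P₊],[P₊*, -D₊]]. Then D₊ = ((1 - |r|²) D₋ + 2 Re(r P₋)) / (1 + |r|²). -/

import Mathlib

/-!
Since `S` is unitary, `S⁻¹ = Sᴴ`, and the `(0,0)` entry of `Sᴴ ρ₋ S` depends only on the first
column `(x, y)` of `S`: it is `(|x|² - |y|²) D₋ + 2 Re(x̄ P₋ y)`. Writing `y = r x`, the column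
normalisation `|x|² + |y|² = 1` becomes `|x|² = 1 / (1 + |r|²)`, and factoring out `|x|²` gives
the formula.
-/

open Complex Matrix ComplexConjugate

lemma Matrix.sum_normSq_apply_eq_one_of_conjTranspose_mul_self {n : Type*} [Fintype n]
    [DecidableEq n] {U : Matrix n n ℂ} (hU : Uᴴ * U = 1) (j : n) :
    ∑ i, normSq (U i j) = 1 := by
  have hjj := congrFun (congrFun hU j) j
  simp only [mul_apply, conjTranspose_apply, one_apply_eq, RCLike.star_def] at hjj
  have hsum : ((∑ i, normSq (U i j) : ℝ) : ℂ) = 1 := by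
    simpa only [ofReal_sum, normSq_eq_conj_mul_self] using hjj
  exact_mod_cast hsum

lemma Matrix.conjTranspose_mul_traceless_hermitian_mul_apply_zero_zero
    (S : Matrix (Fin 2) (Fin 2) ℂ) (D : ℝ) (P : ℂ) :
    (Sᴴ * of ![![(D : ℂ), P], ![conj P, -(D : ℂ)]] * S) 0 0 =
      (((normSq (S 0 0) - normSq (S 1 0)) * D + 2 * (conj (S 0 0) * P * S 1 0).re : ℝ) : ℂ) := by
  apply Complex.ext <;>
    simp [mul_apply, Fin.sum_univ_two, normSq_apply] <;> ring

lemma Complex.normSq_sub_normSq_mul_add_two_re_eq_div {x y r : ℂ} (hy : y = r * x)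
    (hxy : normSq x + normSq y = 1) (D : ℝ) (P : ℂ) :
    (normSq x - normSq y) * D + 2 * (conj x * P * y).re =
      ((1 - ‖r‖ ^ 2) * D + 2 * (r * P).re) / (1 + ‖r‖ ^ 2) := by
  subst hy
  have hcross : conj x * P * (r * x) = (normSq x : ℂ) * (r * P) := by
    rw [normSq_eq_conj_mul_self]; ring
  rw [normSq_mul] at hxy ⊢
  rw [hcross, re_ofReal_mul, Complex.sq_norm,
    eq_div_iff (add_pos_of_pos_of_nonneg one_pos (normSq_nonneg r)).ne']
  linear_combination ((1 - normSq r) * D + 2 * (r * P).re) * hxy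

theorem Dplus_formula_general (S : Matrix (Fin 2) (Fin 2) ℂ)
    (hunit : S * S.conjTranspose = 1)
    (h11 : S 0 0 ≠ 0)
    (D : ℝ) (P : ℂ)
    (ρm : Matrix (Fin 2) (Fin 2) ℂ)
    (hρm : ρm = Matrix.of ![![(D : ℂ), P], ![(starRingEnd ℂ) P, -(D : ℂ)]])
    (r : ℂ) (hr : r = S 1 0 / S 0 0) :
    (S⁻¹ * ρm * S) 0 0 =
      (((1 - ‖r‖ ^ 2) * D + 2 * (r * P).re) / (1 + ‖r‖ ^ 2) : ℝ) := by
  have hcol : normSq (S 0 0) + normSq (S 1 0) = 1 := by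
    simpa [Fin.sum_univ_two] using
      sum_normSq_apply_eq_one_of_conjTranspose_mul_self (mul_eq_one_comm.mp hunit) 0
  have hy : S 1 0 = r * S 0 0 := by rw [hr, div_mul_cancel₀ _ h11]
  rw [inv_eq_right_inv hunit, hρm, conjTranspose_mul_traceless_hermitian_mul_apply_zero_zero,
    normSq_sub_normSq_mul_add_two_re_eq_div hy hcol]

theorem Dplus_formula (S : Matrix (Fin 2) (Fin 2) ℂ)
    (hdet : S.det = 1) (hunit : S * S.conjTranspose = 1)
    (h11 : S 0 0 ≠ 0)
    (D : ℝ) (P : ℂ) (hDP : D ^ 2 + ‖P‖ ^ 2 = 1)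
    (ρm : Matrix (Fin 2) (Fin 2) ℂ)
    (hρm : ρm = Matrix.of ![![(D : ℂ), P], ![(starRingEnd ℂ) P, -(D : ℂ)]])
    (r : ℂ) (hr : r = S 1 0 / S 0 0) :
    (S⁻¹ * ρm * S) 0 0 =
      (((1 - ‖r‖ ^ 2) * D + 2 * (r * P).re) / (1 + ‖r‖ ^ 2) : ℝ) :=
  Dplus_formula_general S hunit h11 D P ρm hρm r hr
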